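/- arXiv:2302.06749 — 3 statements merged into one kernel-verified Lean document; each statement's English description precedes it below -/
import Mathlib

section
/- Let α₁, …, α_{ℓ} be real numbers and s₁, …, s_ℓ, n positive reals such that for each j ∈ [ℓ], sin²α_j = (s_j/n)·∏_{k=1}^{j-1} (sin(3α_k)/sin α_k)², with all sin α_k ≠ 0. Then for each j ∈ [ℓ], sin(3α_j)/sin α_j ≥ 3 - 4·s_j·9^{j-1}/n. -/
open Real Finset

/-! Since `sin (3x) = (3 - 4 sin² x) sin x`, the stage ratio `sin (3α) / sin α` equals
`3 - 4 sin² α` and its square is at most `9`. Hence the product in the recursion is at most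
`9 ^ (j - 1)`, so `sin² α_j ≤ s_j 9 ^ (j - 1) / n`, which is the claimed lower bound. -/

theorem Real.sin_three_mul_div_sin {x : ℝ} (hx : sin x ≠ 0) :
    sin (3 * x) / sin x = 3 - 4 * sin x ^ 2 := by
  rw [sin_three_mul]
  field_simp

theorem Real.sq_sin_three_mul_div_sin_le (x : ℝ) : (sin (3 * x) / sin x) ^ 2 ≤ 9 := by
  by_cases hx : sin x = 0
  · simp [hx]
  · rw [sin_three_mul_div_sin hx]
    nlinarith [sin_sq_le_one x, sq_nonneg (sin x)]

theorem Real.prod_sq_sin_three_mul_div_sin_le {ι : Type*} (t : Finset ι) (α : ι → ℝ) :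
    ∏ k ∈ t, (sin (3 * α k) / sin (α k)) ^ 2 ≤ 9 ^ #t := by
  calc ∏ k ∈ t, (sin (3 * α k) / sin (α k)) ^ 2
      ≤ ∏ _k ∈ t, (9 : ℝ) :=
        prod_le_prod (fun _ _ => sq_nonneg _) fun k _ => sq_sin_three_mul_div_sin_le (α k)
    _ = 9 ^ #t := prod_const 9

theorem amplification_ratio_lower_bound_general
    (ℓ : ℕ) (α s : ℕ → ℝ) (n : ℝ)
    (hsin : ∀ k ∈ Finset.Icc 1 ℓ, Real.sin (α k) ≠ 0)
    (hrec : ∀ j ∈ Finset.Icc 1 ℓ,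
      Real.sin (α j) ^ 2 =
        s j / n * ∏ k ∈ Finset.Icc 1 (j - 1), (Real.sin (3 * α k) / Real.sin (α k)) ^ 2) :
    ∀ j ∈ Finset.Icc 1 ℓ,
      Real.sin (3 * α j) / Real.sin (α j) ≥ 3 - 4 * s j * 9 ^ (j - 1) / n := by
  intro j hj
  set P := ∏ k ∈ Icc 1 (j - 1), (sin (3 * α k) / sin (α k)) ^ 2
  have hP : P ≤ 9 ^ (j - 1) := by
    simpa only [Nat.card_Icc, Nat.add_sub_cancel] using
      prod_sq_sin_three_mul_div_sin_le (Icc 1 (j - 1)) α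
  have hPnonneg : 0 ≤ P := prod_nonneg fun _ _ => sq_nonneg _
  have hcoeff : 0 ≤ s j / n := by
    have hsin_sq : 0 < s j / n * P := hrec j hj ▸ pow_two_pos_of_ne_zero (hsin j hj)
    exact (pos_of_mul_pos_left hsin_sq hPnonneg).le
  have hsin_sq_le : sin (α j) ^ 2 ≤ s j / n * 9 ^ (j - 1) :=
    hrec j hj ▸ mul_le_mul_of_nonneg_left hP hcoeff
  rw [sin_three_mul_div_sin (hsin j hj), ge_iff_le, mul_assoc, mul_div_assoc, mul_div_right_comm]
  linarith

theorem amplification_ratio_lower_bound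
    (ℓ : ℕ) (α s : ℕ → ℝ) (n : ℝ) (hn : 0 < n)
    (hs : ∀ j ∈ Finset.Icc 1 ℓ, 0 < s j)
    (hsin : ∀ k ∈ Finset.Icc 1 ℓ, Real.sin (α k) ≠ 0)
    (hrec : ∀ j ∈ Finset.Icc 1 ℓ,
      Real.sin (α j) ^ 2 =
        s j / n * ∏ k ∈ Finset.Icc 1 (j - 1), (Real.sin (3 * α k) / Real.sin (α k)) ^ 2) :
    ∀ j ∈ Finset.Icc 1 ℓ,
      Real.sin (3 * α j) / Real.sin (α j) ≥ 3 - 4 * s j * 9 ^ (j - 1) / n :=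
  amplification_ratio_lower_bound_general ℓ α s n hsin hrec
end

section
/- Let n = s₀ ≥ s₁ ≥ ⋯ ≥ s_d = m be nonnegative integers, and let ℓ ∈ [1,d] satisfy 9^{ℓ-1} ≤ n/m ≤ 9^ℓ (with m ≥ 1). If ∑_{k=1}^{d-1} 9^k (s_k − s_{k+1}) < n, then ∑_{j=1}^{ℓ-1} 9^j s_j < 9n/4. -/
/-!
Split the budget sum at `ℓ`. Summation by parts turns its first part into
`(8/9) ∑_{j=1}^{ℓ-1} 9^j s_j + s_1 - 9^(ℓ-1) s_ℓ`, and since the weights `9^k` increase and the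
differences `s_k - s_(k+1)` are nonnegative, the second part is at least `9^ℓ (s_ℓ - m)`.
As `s_ℓ ≥ m`, the budget is therefore at least `(8/9) ∑_{j=1}^{ℓ-1} 9^j s_j - 9^(ℓ-1) m`, and
`9^(ℓ-1) m ≤ n` gives `(8/9) ∑_{j=1}^{ℓ-1} 9^j s_j < 2n`.
-/

open Finset

section WeightedTelescoping

variable {R : Type*} [CommRing R]

theorem mul_sum_Ico_pow_mul_sub_succ (r : R) (f : ℕ → R) {a b : ℕ} (hab : a ≤ b) :
    r * ∑ k ∈ Ico a b, r ^ k * (f k - f (k + 1)) =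
      (r - 1) * ∑ k ∈ Ico a b, r ^ k * f k + r ^ a * f a - r ^ b * f b := by
  induction b, hab using Nat.le_induction with
  | base => simp
  | succ b hab ih =>
    rw [sum_Ico_succ_top hab, sum_Ico_succ_top hab, mul_add, ih]
    ring

variable [PartialOrder R] [IsOrderedRing R]

theorem pow_mul_sub_le_sum_Ico_pow_mul_sub_succ {r : R} (hr : 1 ≤ r) {f : ℕ → R} {a b : ℕ}
    (hab : a ≤ b) (hf : ∀ k ∈ Ico a b, f (k + 1) ≤ f k) :
    r ^ a * (f a - f b) ≤ ∑ k ∈ Ico a b, r ^ k * (f k - f (k + 1)) := by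
  rw [← neg_sub, ← sum_Ico_sub f hab, mul_neg, mul_sum, ← sum_neg_distrib]
  refine sum_le_sum fun k hk => ?_
  rw [← mul_neg, neg_sub]
  exact mul_le_mul_of_nonneg_right (pow_le_pow_right₀ hr (mem_Ico.1 hk).1)
    (sub_nonneg.2 (hf k hk))

end WeightedTelescoping

theorem le_of_succ_le_of_forall_Ico {α : Type*} [Preorder α] {f : ℕ → α} {a b : ℕ}
    (hab : a ≤ b) (hf : ∀ k ∈ Ico a b, f (k + 1) ≤ f k) : f b ≤ f a := by
  induction b, hab using Nat.le_induction with
  | base => rfl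
  | succ b hab ih =>
    exact (hf b (mem_Ico.2 ⟨hab, b.lt_succ_self⟩)).trans
      (ih fun k hk => hf k (Ico_subset_Ico_right b.le_succ hk))

theorem key_combinatorial_lemma_general (d ℓ n m : ℕ) (s : ℕ → ℕ)
    (hsd : s d = m)
    (hmono : ∀ k, k < d → s (k + 1) ≤ s k)
    (hℓ1 : 1 ≤ ℓ) (hℓd : ℓ ≤ d)
    (hlow : 9 ^ (ℓ - 1) * m ≤ n)
    (hbudget : ∑ k ∈ Finset.Icc 1 (d - 1), (9 : ℝ) ^ k * ((s k : ℝ) - s (k + 1)) < n) :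
    ∑ j ∈ Finset.Icc 1 (ℓ - 1), (9 : ℝ) ^ j * s j < 9 * n / 4 := by
  obtain ⟨L, rfl⟩ : ∃ L, ℓ = L + 1 := ⟨ℓ - 1, by omega⟩
  set f : ℕ → ℝ := fun k => s k
  have hf : ∀ k ∈ Ico (L + 1) d, f (k + 1) ≤ f k := fun k hk =>
    Nat.cast_le.2 (hmono k (mem_Ico.1 hk).2)
  rw [Nat.add_sub_cancel] at hlow
  rw [Nat.add_sub_cancel, ← Ico_add_one_right_eq_Icc]
  rw [← Ico_add_one_right_eq_Icc, Nat.sub_add_cancel (hℓ1.trans hℓd),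
    ← sum_Ico_consecutive _ hℓ1 hℓd] at hbudget
  have hhead := mul_sum_Ico_pow_mul_sub_succ (9 : ℝ) f hℓ1
  have htail := pow_mul_sub_le_sum_Ico_pow_mul_sub_succ (by norm_num : (1 : ℝ) ≤ 9) hℓd hf
  have hsL : (9 : ℝ) ^ (L + 1) * m ≤ 9 ^ (L + 1) * f (L + 1) := by
    rw [← hsd]
    exact mul_le_mul_of_nonneg_left (le_of_succ_le_of_forall_Ico (f := f) hℓd hf) (by positivity)
  have hlowR : (9 : ℝ) ^ (L + 1) * m ≤ 9 * n := by
    rw [pow_succ', mul_assoc]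
    exact_mod_cast Nat.mul_le_mul_left 9 hlow
  have hs1 : 0 ≤ f 1 := Nat.cast_nonneg _
  simp only [f, hsd] at htail
  linarith

theorem key_combinatorial_lemma (d ℓ n m : ℕ) (s : ℕ → ℕ)
    (hs0 : s 0 = n) (hsd : s d = m)
    (hmono : ∀ k, k < d → s (k + 1) ≤ s k)
    (hm : 1 ≤ m) (hℓ1 : 1 ≤ ℓ) (hℓd : ℓ ≤ d)
    (hlow : 9 ^ (ℓ - 1) * m ≤ n) (hhigh : n ≤ 9 ^ ℓ * m)
    (hbudget : ∑ k ∈ Finset.Icc 1 (d - 1), (9 : ℝ) ^ k * ((s k : ℝ) - s (k + 1)) < n) :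
    ∑ j ∈ Finset.Icc 1 (ℓ - 1), (9 : ℝ) ^ j * s j < 9 * n / 4 :=
  key_combinatorial_lemma_general d ℓ n m s hsd hmono hℓ1 hℓd hlow hbudget
end

section
/- Let 0 = T₀ < T₁ < ⋯ < T_d with T_j = 3^{j}·√(T/n)·3 (i.e., T_j = 3^j T₁ with T₁ = 3√(T/n)), t : [n] → ℝ₊ with ∑ t_i² ≤ T, x ∈ {0,1}^n, and S_j, s_j = |S_j| as above with S_d = {i : x_i = 1}. Then (T/n)·∑_{j=2}^{d} 9^{j-1}·|S_{j-1} \ S_j| < T, and hence ∑_{k=1}^{d-1} 9^k (s_k − s_{k+1}) < n. -/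
/-! An element of `S (j - 1) \ S j` is unmarked with `T_{j-1} < t i ≤ T_j`, so these layers are
disjoint and each of their elements has `t i ^ 2 > T_{j-1} ^ 2 = 9 ^ (j - 1) * T / n`. Summing over
the layers bounds `T / n * ∑ 9 ^ (j - 1) * #(S (j - 1) \ S j)` by `∑ t i ^ 2 ≤ T`, strictly because
every `t i > 0`. The second inequality is the first divided by `T / n`, after reindexing, since the
`S j` decrease for `j ≥ 1`. -/

open Finset
open scoped Function

theorem sum_mul_card_lt_sum_of_pairwiseDisjoint {ι κ R : Type*} [Fintype ι] [Nonempty ι]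
    [DecidableEq ι] [Semiring R] [PartialOrder R] [IsStrictOrderedRing R]
    {s : Finset κ} {L : κ → Finset ι} {w : κ → R} {f : ι → R}
    (hL : (s : Set κ).PairwiseDisjoint L) (hf : ∀ i, 0 < f i)
    (hw : ∀ k ∈ s, ∀ i ∈ L k, w k < f i) :
    ∑ k ∈ s, w k * #(L k) < ∑ i, f i := by
  have hlayer : ∀ k ∈ s, w k * #(L k) = ∑ _i ∈ L k, w k := fun k _ => by
    rw [sum_const, nsmul_eq_mul']
  by_cases hne : ∃ k ∈ s, (L k).Nonempty
  · obtain ⟨k, hk, hLk⟩ := hne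
    calc ∑ k ∈ s, w k * #(L k) = ∑ k ∈ s, ∑ _i ∈ L k, w k := sum_congr rfl hlayer
      _ < ∑ k ∈ s, ∑ i ∈ L k, f i :=
          sum_lt_sum (fun k hk => sum_le_sum fun i hi => (hw k hk i hi).le)
            ⟨k, hk, sum_lt_sum_of_nonempty hLk (hw k hk)⟩
      _ = ∑ i ∈ s.biUnion L, f i := (sum_biUnion hL).symm
      _ ≤ ∑ i, f i := sum_le_univ_sum_of_nonneg fun i => (hf i).le
  · push Not at hne
    calc ∑ k ∈ s, w k * #(L k) = 0 :=
          sum_eq_zero fun k hk => by simp [hne k hk]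
      _ < ∑ i, f i := sum_pos (fun i _ => hf i) univ_nonempty

theorem sum_Icc_add_one_comp_sub_one {M : Type*} [AddCommMonoid M] (f : ℕ → M) {a : ℕ}
    (ha : 0 < a) (b : ℕ) : ∑ j ∈ Icc (a + 1) b, f (j - 1) = ∑ k ∈ Icc a (b - 1), f k := by
  refine sum_nbij' (· - 1) (· + 1) ?_ ?_ ?_ ?_ fun _ _ => rfl <;> intro j hj <;>
    simp only [mem_Icc] at hj ⊢ <;> omega

section MarkedOrAbove

variable {ι α : Type*} [Fintype ι] [LinearOrder α]

def markedOrAbove (θ : α) (t : ι → α) (x : ι → Bool) : Finset ι :=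
  univ.filter fun i => θ < t i ∨ (t i ≤ θ ∧ x i = true)

variable {t : ι → α} {x : ι → Bool}

theorem markedOrAbove_anti {θ θ' : α} (h : θ ≤ θ') :
    markedOrAbove θ' t x ⊆ markedOrAbove θ t x := by
  intro i
  simp only [markedOrAbove, mem_filter, mem_univ, true_and]
  rintro (hlt | ⟨-, hx⟩)
  · exact .inl (h.trans_lt hlt)
  · exact (lt_or_ge θ (t i)).imp_right fun hle => ⟨hle, hx⟩

theorem markedOrAbove_sdiff_subset [DecidableEq ι] (θ θ' : α) :
    markedOrAbove θ t x \ markedOrAbove θ' t x ⊆ univ.filter fun i => t i ∈ Set.Ioc θ θ' := by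
  intro i
  simp only [markedOrAbove, mem_sdiff, mem_filter, mem_univ, true_and, not_or, not_and,
    not_lt, Set.mem_Ioc]
  rintro ⟨hlt | ⟨-, hx⟩, hle, hnx⟩
  · exact ⟨hlt, hle⟩
  · exact absurd hx (hnx hle)

theorem pairwise_disjoint_markedOrAbove_sdiff [DecidableEq ι] {θ : ℕ → α} (hθ : Monotone θ) :
    Pairwise (Disjoint on fun j => markedOrAbove (θ (j - 1)) t x \ markedOrAbove (θ j) t x) := by
  intro a b hab
  have hIoc := hθ.pairwise_disjoint_on_Ioc_pred hab
  simp only [Function.onFun, Order.pred_eq_sub_one] at hIoc ⊢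
  refine .mono (markedOrAbove_sdiff_subset _ _) (markedOrAbove_sdiff_subset _ _) ?_
  exact disjoint_filter.2 fun i _ ha hb => Set.disjoint_left.1 hIoc ha hb

end MarkedOrAbove

theorem sum_sq_mul_card_markedOrAbove_sdiff_lt {ι : Type*} [Fintype ι] [Nonempty ι]
    [DecidableEq ι] {t : ι → ℝ} (ht : ∀ i, 0 < t i) (x : ι → Bool) {θ : ℕ → ℝ}
    (hθ : Monotone θ) (hθ_nonneg : ∀ j, 0 ≤ θ j) (s : Finset ℕ) :
    ∑ j ∈ s, θ (j - 1) ^ 2 * #(markedOrAbove (θ (j - 1)) t x \ markedOrAbove (θ j) t x) <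
      ∑ i, t i ^ 2 := by
  refine sum_mul_card_lt_sum_of_pairwiseDisjoint
    (fun a _ b _ hab => pairwise_disjoint_markedOrAbove_sdiff hθ hab)
    (fun i => pow_pos (ht i) 2) fun j _ i hi => ?_
  have hlt : θ (j - 1) < t i := (mem_filter.1 (markedOrAbove_sdiff_subset _ _ hi)).2.1
  exact pow_lt_pow_left₀ hlt (hθ_nonneg _) two_ne_zero

theorem three_pow_mul_sqrt_sq {c : ℝ} (hc : 0 ≤ c) (k : ℕ) : (3 ^ k * √c) ^ 2 = c * 9 ^ k := by
  rw [mul_pow, Real.sq_sqrt hc, ← pow_mul, mul_comm k, pow_mul]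
  norm_num [mul_comm]

theorem budget_inequality_general (n d : ℕ) (hn : 0 < n) (T : ℝ)
    (Ts : ℕ → ℝ)
    (hTs : ∀ j, 1 ≤ j → Ts j = 3 ^ j * Real.sqrt (T / n))
    (t : Fin n → ℝ) (ht : ∀ i, 0 < t i) (hsum : ∑ i, t i ^ 2 ≤ T)
    (x : Fin n → Bool) (S : ℕ → Finset (Fin n))
    (hS : ∀ j, S j = Finset.univ.filter
      (fun i => Ts j < t i ∨ (t i ≤ Ts j ∧ x i = true))) :
    T / n * ∑ j ∈ Finset.Icc 2 d, (9 : ℝ) ^ (j - 1) * ((S (j - 1) \ S j).card : ℝ) < T ∧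
      ∑ k ∈ Finset.Icc 1 (d - 1), (9 : ℝ) ^ k * (((S k).card : ℝ) - ((S (k + 1)).card : ℝ))
        < n := by
  have hT : 0 ≤ T := (sum_nonneg fun i _ => sq_nonneg (t i)).trans hsum
  set θ : ℕ → ℝ := fun j => 3 ^ j * √(T / n)
  have hθ : Monotone θ := fun a b hab =>
    mul_le_mul_of_nonneg_right (pow_le_pow_right₀ (by norm_num) hab) (Real.sqrt_nonneg _)
  have hSθ : ∀ j, 1 ≤ j → S j = markedOrAbove (θ j) t x := fun j hj => by
    rw [hS, hTs j hj]; rfl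
  have hlayer : ∀ j ∈ Icc 2 d, T / n * (9 ^ (j - 1) * #(S (j - 1) \ S j)) =
      θ (j - 1) ^ 2 * #(markedOrAbove (θ (j - 1)) t x \ markedOrAbove (θ j) t x) := by
    intro j hj
    rw [mem_Icc] at hj
    rw [hSθ j (by omega), hSθ (j - 1) (by omega), three_pow_mul_sqrt_sq (by positivity), mul_assoc]
  have hfirst : T / n * ∑ j ∈ Icc 2 d, (9 : ℝ) ^ (j - 1) * #(S (j - 1) \ S j) < T := by
    have : Nonempty (Fin n) := ⟨⟨0, hn⟩⟩
    rw [mul_sum, sum_congr rfl hlayer]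
    exact (sum_sq_mul_card_markedOrAbove_sdiff_lt ht x hθ (fun j => by positivity) _).trans_le hsum
  refine ⟨hfirst, ?_⟩
  have hreindex : ∑ k ∈ Icc 1 (d - 1), (9 : ℝ) ^ k * (#(S k) - #(S (k + 1)) : ℝ) =
      ∑ j ∈ Icc 2 d, (9 : ℝ) ^ (j - 1) * #(S (j - 1) \ S j) := by
    rw [← sum_Icc_add_one_comp_sub_one _ one_pos]
    refine sum_congr rfl fun j hj => ?_
    rw [mem_Icc] at hj
    rw [Nat.sub_add_cancel (by omega : 1 ≤ j), hSθ (j - 1) (by omega), hSθ j (by omega),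
      cast_card_sdiff (markedOrAbove_anti (hθ (Nat.sub_le j 1)))]
  have hn' : (0 : ℝ) < n := by exact_mod_cast hn
  rw [hreindex]
  refine lt_of_mul_lt_mul_left ?_ (div_nonneg hT hn'.le)
  rwa [div_mul_cancel₀ T hn'.ne']

theorem budget_inequality (n d : ℕ) (hn : 0 < n) (hd : 1 ≤ d) (T : ℝ)
    (Ts : ℕ → ℝ) (hTs0 : Ts 0 = 0)
    (hTs : ∀ j, 1 ≤ j → Ts j = 3 ^ j * Real.sqrt (T / n))
    (t : Fin n → ℝ) (ht : ∀ i, 0 < t i) (hsum : ∑ i, t i ^ 2 ≤ T)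
    (x : Fin n → Bool) (S : ℕ → Finset (Fin n))
    (hS : ∀ j, S j = Finset.univ.filter
      (fun i => Ts j < t i ∨ (t i ≤ Ts j ∧ x i = true)))
    (hSd : S d = Finset.univ.filter (fun i => x i = true)) :
    T / n * ∑ j ∈ Finset.Icc 2 d, (9 : ℝ) ^ (j - 1) * ((S (j - 1) \ S j).card : ℝ) < T ∧
      ∑ k ∈ Finset.Icc 1 (d - 1), (9 : ℝ) ^ k * (((S k).card : ℝ) - ((S (k + 1)).card : ℝ))
        < n :=
  budget_inequality_general n d hn T Ts hTs t ht hsum x S hS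
end
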